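/- Let Λ ⊂ ℝ^n be a well-rounded full-rank lattice with basis matrix B. For i ∈ {1,...,n}, define the subset Λ̃_i = {z·B : z ∈ ℤ^n, z_i > 0}. Then Λ̃_i ∩ S(Λ) ≠ ∅ for all i, where S(Λ) is the set of shortest nonzero lattice vectors. -/

import Mathlib

/-!
The `i`-th coordinate with respect to the rows of `B` is a nonzero linear functional, so it cannot
vanish on the spanning set `S`. Since `S` is symmetric under `v ↦ -v`, some shortest vector has a
positive `i`-th coordinate.
-/

theorem LinearMap.exists_apply_ne_zero_of_span_eq_top {R M : Type*} [Semiring R]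
    [AddCommMonoid M] [Module R M] {S : Set M} (hS : Submodule.span R S = ⊤)
    {f : M →ₗ[R] R} (hf : f ≠ 0) : ∃ v ∈ S, f v ≠ 0 := by
  by_contra! h
  exact hf (LinearMap.ext_on hS h)

theorem LinearMap.exists_apply_pos_of_neg_mem {R M : Type*} [Ring R] [LinearOrder R]
    [IsOrderedRing R] [AddCommGroup M] [Module R M] {S : Set M} (hneg : ∀ v ∈ S, -v ∈ S)
    {f : M →ₗ[R] R} (h : ∃ v ∈ S, f v ≠ 0) : ∃ v ∈ S, 0 < f v := by
  obtain ⟨v, hv, hfv⟩ := h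
  rcases hfv.lt_or_gt with hlt | hgt
  · exact ⟨-v, hneg v hv, by rwa [map_neg, neg_pos]⟩
  · exact ⟨v, hv, hgt⟩

namespace Matrix

variable {ι : Type*} [Fintype ι] [DecidableEq ι] (B : Matrix ι ι ℝ)

noncomputable def rowCoord (i : ι) : EuclideanSpace ℝ ι →ₗ[ℝ] ℝ :=
  LinearMap.proj i ∘ₗ B⁻¹.vecMulLinear ∘ₗ (WithLp.linearEquiv 2 ℝ (ι → ℝ)).toLinearMap

variable {B}

theorem rowCoord_eq_of_eq_sum (hB : IsUnit B.det) (i : ι) {v : EuclideanSpace ℝ ι}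
    {z : ι → ℝ} (hv : ∀ j, v j = ∑ k, z k * B k j) : rowCoord B i v = z i := by
  have hvz : v.ofLp = z ᵥ* B := funext hv
  change (v.ofLp ᵥ* B⁻¹) i = z i
  rw [hvz, vecMul_vecMul, mul_nonsing_inv B hB, vecMul_one]

theorem rowCoord_ne_zero (hB : IsUnit B.det) (i : ι) : rowCoord B i ≠ 0 := by
  intro h
  have h1 : rowCoord B i (WithLp.toLp 2 (Pi.single i 1 ᵥ* B)) = 1 :=
    (rowCoord_eq_of_eq_sum hB i fun _ => rfl).trans (Pi.single_eq_same i 1)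
  simp [h] at h1

end Matrix

theorem stmt_4_general (n : ℕ) (B : Matrix (Fin n) (Fin n) ℝ) (hB : IsUnit B.det)
    (L : Set (EuclideanSpace ℝ (Fin n)))
    (hL : L = {v | ∃ z : Fin n → ℤ, ∀ j, v j = ∑ i, (z i : ℝ) * B i j})
    (lam : ℝ)
    (S : Set (EuclideanSpace ℝ (Fin n)))
    (hS : S = {v ∈ L | ‖v‖ = lam})
    (hspan : Submodule.span ℝ S = ⊤)
    (Lt : Fin n → Set (EuclideanSpace ℝ (Fin n)))
    (hLt : ∀ i, Lt i =
      {v | ∃ z : Fin n → ℤ, (∀ j, v j = ∑ k, (z k : ℝ) * B k j) ∧ 0 < z i}) :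
    ∀ i : Fin n, (Lt i ∩ S).Nonempty := by
  intro i
  have hneg : ∀ v ∈ S, -v ∈ S := by
    rw [hS, hL]
    rintro v ⟨⟨z, hz⟩, hnorm⟩
    refine ⟨⟨-z, fun j => ?_⟩, by rwa [norm_neg]⟩
    simp [hz j, ← Finset.sum_neg_distrib]
  obtain ⟨v, hvS, hpos⟩ := LinearMap.exists_apply_pos_of_neg_mem hneg
    (LinearMap.exists_apply_ne_zero_of_span_eq_top hspan (Matrix.rowCoord_ne_zero hB i))
  obtain ⟨z, hz⟩ : v ∈ {v | ∃ z : Fin n → ℤ, ∀ j, v j = ∑ i, (z i : ℝ) * B i j} := by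
    rw [hS, hL] at hvS; exact hvS.1
  rw [Matrix.rowCoord_eq_of_eq_sum hB i hz, Int.cast_pos] at hpos
  exact ⟨v, hLt i ▸ ⟨z, hz, hpos⟩, hvS⟩

theorem stmt_4 (n : ℕ) (B : Matrix (Fin n) (Fin n) ℝ) (hB : IsUnit B.det)
    (L : Set (EuclideanSpace ℝ (Fin n)))
    (hL : L = {v | ∃ z : Fin n → ℤ, ∀ j, v j = ∑ i, (z i : ℝ) * B i j})
    (lam : ℝ) (hlam : 0 < lam)
    (hmin : ∀ v ∈ L, v ≠ 0 → lam ≤ ‖v‖)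
    (S : Set (EuclideanSpace ℝ (Fin n)))
    (hS : S = {v ∈ L | ‖v‖ = lam})
    (hspan : Submodule.span ℝ S = ⊤)
    (Lt : Fin n → Set (EuclideanSpace ℝ (Fin n)))
    (hLt : ∀ i, Lt i =
      {v | ∃ z : Fin n → ℤ, (∀ j, v j = ∑ k, (z k : ℝ) * B k j) ∧ 0 < z i}) :
    ∀ i : Fin n, (Lt i ∩ S).Nonempty :=
  stmt_4_general n B hB L hL lam S hS hspan Lt hLt
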